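/- arXiv:1612.08330 — 7 statements merged into one kernel-verified Lean document; each statement's English description precedes it below -/
import Mathlib

section
/- In a nonempty meet-semilattice S of locally finite height, any pair of elements that is bounded above has a least upper bound. -/
/-- In a nonempty meet-semilattice of locally finite height, any pair of
elements bounded above has a least upper bound. -/
theorem stmt2 {α : Type*} [SemilatticeInf α] [Nonempty α]
    (hfin : ∀ x : α, Order.height x ≠ ⊤)
    (x y : α) (hbdd : ∃ u : α, x ≤ u ∧ y ≤ u) :
    ∃ s : α, IsLUB {x, y} s := by
  classical
  set U : Set α := {u | x ≤ u ∧ y ≤ u} with hU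
  obtain ⟨u0, hu0⟩ := hbdd
  have hT : {n : ℕ∞ | ∃ u ∈ U, Order.height u = n}.Nonempty := ⟨_, u0, hu0, rfl⟩
  obtain ⟨n, ⟨u, huU, hun⟩, hmin⟩ :=
    (wellFounded_lt : WellFounded ((· < ·) : ℕ∞ → ℕ∞ → Prop)).has_min _ hT
  refine ⟨u, ?_, ?_⟩
  · rintro z (rfl | rfl)
    · exact huU.1
    · exact huU.2
  · intro v hv
    have hvU : v ∈ U := ⟨hv (by simp), hv (by simp)⟩
    have hinf : u ⊓ v ∈ U := ⟨le_inf huU.1 hvU.1, le_inf huU.2 hvU.2⟩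
    have heq : u ⊓ v = u := by
      by_contra hne
      have hlt : u ⊓ v < u := lt_of_le_of_ne inf_le_left hne
      have := Order.height_strictMono hlt ((hfin (u ⊓ v)).lt_top)
      exact hmin _ ⟨_, hinf, rfl⟩ (hun ▸ this)
    calc u = u ⊓ v := heq.symm
      _ ≤ v := inf_le_right
end

section
/- Let S be a nonempty locally distributive meet-semilattice of locally finite height, and let A be a set of join-irreducible elements of S. If A is bounded above in S, then A is finite; moreover, if A ⊆ S^{≤u}, then the cardinality of A is at most the height of u. -/
/-!
Induct on the height of `u`. If `u ≠ ⊥`, pick `x ⋖ u`. For every `p ≤ u` with `p ≰ x` the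
covering relation forces `u` to be the least upper bound of `x` and `p`, so by distributivity
every join-irreducible `q ≤ u` is the join of `q ⊓ x` and `q ⊓ p`, whence `q ≤ x` or `q ≤ p`.
Thus at most one element of `A` lies outside `Iic x`, and the rest is counted by the induction
hypothesis at `x`, whose height is one less.
-/

/-- An element of a meet-semilattice with minimum `⊥` is join-irreducible if it is not `⊥`
and it is not the join (least upper bound) of two strictly smaller elements. -/
def JoinIrred {α : Type*} [SemilatticeInf α] [OrderBot α] (x : α) : Prop :=
  x ≠ ⊥ ∧ ∀ y z : α, y < x → z < x → ¬ IsLUB {y, z} x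

open Order Set

theorem Order.exists_covBy_of_height_eq_add_one {α : Type*} [Preorder α] {u : α} {n : ℕ}
    (h : height u = n + 1) : ∃ x, x ⋖ u ∧ height x = n := by
  obtain ⟨hfin, ⟨x, hxu, hx⟩, hle⟩ := height_eq_coe_add_one_iff.mp h
  refine ⟨x, ⟨hxu, fun w hxw hwu => ?_⟩, hx⟩
  have hlt : height x < height w := height_strictMono hxw (hx ▸ ENat.natCast_lt_top n)
  exact (hx ▸ hlt).not_ge (hle w hwu)

section

variable {α : Type*} [SemilatticeInf α]

theorem CovBy.isLUB_pair {x u p : α} (hxu : x ⋖ u) (hpu : p ≤ u) (hpx : ¬ p ≤ x) :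
    IsLUB {x, p} u := by
  refine ⟨by rintro b (rfl | rfl); exacts [hxu.le, hpu], fun b hb => ?_⟩
  have hpb : p ≤ b := hb (mem_insert_of_mem _ rfl)
  rcases hxu.eq_or_eq (le_inf (hb (mem_insert _ _)) hxu.le) inf_le_right with h | h
  · exact absurd (h ▸ le_inf hpb hpu) hpx
  · exact inf_eq_right.mp h

variable [OrderBot α]
  (hdist : ∀ a b c j : α, IsLUB {b, c} j → IsLUB {a ⊓ b, a ⊓ c} (a ⊓ j))
include hdist

theorem JoinIrred.le_or_le_of_isLUB {q x p u : α} (hq : JoinIrred q) (hlub : IsLUB {x, p} u)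
    (hqu : q ≤ u) : q ≤ x ∨ q ≤ p := by
  have h := hdist q x p u hlub
  rw [inf_eq_left.mpr hqu] at h
  by_contra! hne
  exact hq.2 _ _ (inf_lt_left.mpr hne.1) (inf_lt_left.mpr hne.2) h

theorem Set.subsingleton_diff_Iic_of_covBy {A : Set α} (hirr : ∀ a ∈ A, JoinIrred a)
    {x u : α} (hxu : x ⋖ u) (hA : A ⊆ Iic u) : (A \ Iic x).Subsingleton := by
  have hle : ∀ p ∈ A \ Iic x, ∀ q ∈ A \ Iic x, q ≤ p := fun p hp q hq =>
    ((hirr q hq.1).le_or_le_of_isLUB hdist (hxu.isLUB_pair (hA hp.1) hp.2)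
      (hA hq.1)).resolve_left hq.2
  exact fun p hp q hq => le_antisymm (hle q hq p hp) (hle p hp q hq)

theorem Set.encard_le_height_of_joinIrred {A : Set α} (hirr : ∀ a ∈ A, JoinIrred a) {u : α}
    (hA : A ⊆ Iic u) : A.encard ≤ height u := by
  by_cases hu : height u = ⊤
  · exact hu ▸ le_top
  obtain ⟨n, hn⟩ := ENat.ne_top_iff_exists.mp hu
  rw [← hn]
  clear hu
  induction n generalizing u A with
  | zero =>
    have hbot : u = ⊥ := (height_eq_zero.mp (by exact_mod_cast hn.symm)).eq_bot
    have hempty : A = ∅ := eq_empty_of_forall_notMem fun a ha =>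
      (hirr a ha).1 (le_bot_iff.mp (hbot ▸ hA ha))
    simp [hempty]
  | succ n ih =>
    obtain ⟨x, hxu, hx⟩ := exists_covBy_of_height_eq_add_one (by exact_mod_cast hn.symm)
    rw [← encard_sdiff_add_encard_inter A (Iic x), Nat.cast_succ, add_comm (n : ℕ∞)]
    exact add_le_add
      (encard_le_one_iff_subsingleton.mpr (subsingleton_diff_Iic_of_covBy hdist hirr hxu hA))
      (ih (fun a ha => hirr a ha.1) inter_subset_right hx.symm)

end

/-- In a nonempty locally distributive meet-semilattice of locally finite
height, any set of join-irreducible elements bounded above is finite; moreover if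
`A ⊆ S^{≤u}` then `#A ≤ height u`. -/
theorem stmt5 {α : Type*} [SemilatticeInf α] [OrderBot α]
    (hfin : ∀ x : α, Order.height x ≠ ⊤)
    (hdist : ∀ a b c j : α, IsLUB {b, c} j → IsLUB {a ⊓ b, a ⊓ c} (a ⊓ j))
    (A : Set α) (hirr : ∀ a ∈ A, JoinIrred a) (hbdd : BddAbove A) :
    A.Finite ∧ ∀ u : α, A ⊆ Set.Iic u → (A.ncard : ℕ∞) ≤ Order.height u := by
  obtain ⟨u₀, hu₀⟩ := hbdd
  have hA : A.Finite := finite_of_encard_le_coe (k := (height u₀).toNat) <| by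
    rw [ENat.natCast_toNat (hfin u₀)]
    exact encard_le_height_of_joinIrred hdist hirr hu₀
  refine ⟨hA, fun u hu => ?_⟩
  rw [hA.cast_ncard_eq]
  exact encard_le_height_of_joinIrred hdist hirr hu
end

section
/- Every locally Boolean meet-semilattice of locally finite height is order-isomorphic to the face poset (including the empty face) of some abstract simplicial complex, ordered by inclusion. -/
/-- An abstract simplicial complex on a vertex type `V`: a family of finite subsets of `V`
closed under taking subsets. -/
structure ASC (V : Type*) where
  faces : Set (Finset V)
  down_closed : ∀ ⦃σ τ : Finset V⦄, σ ∈ faces → τ ⊆ σ → τ ∈ faces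

/-! The vertices are the atoms, and `x` corresponds to the set of atoms below it.
Distributivity makes an atom below the join of `b` and `c` lie below `b` or below `c`, so the
relative complement of an atom `b ≤ x` in `[⊥, x]` has exactly the atoms of `x` other than `b`
below it. Hence the image is closed under removing a vertex, i.e. under subsets, and `x` has at
most `height x` atoms below it. If every atom below `x` lies below `y`, the relative complement
of `x ⊓ y` in `[⊥, x]` has no atom below it; finite height makes the order atomic, so that
complement is `⊥` and `x ≤ y`. -/

lemma Finset.mem_of_subset_of_forall_erase_mem {β : Type*} [DecidableEq β]
    {S : Set (Finset β)} (hS : ∀ σ ∈ S, ∀ a ∈ σ, σ.erase a ∈ S) {σ τ : Finset β}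
    (hσ : σ ∈ S) (hτ : τ ⊆ σ) : τ ∈ S := by
  suffices h : ∀ t : Finset β, σ \ t ∈ S by
    simpa [Finset.sdiff_sdiff_eq_self hτ] using h (σ \ τ)
  intro t
  induction t using Finset.induction_on with
  | empty => simpa using hσ
  | insert a t _ ih =>
    rw [Finset.sdiff_insert]
    by_cases ha : a ∈ σ \ t
    · exact hS _ ih a ha
    · rwa [Finset.erase_eq_of_notMem ha]

lemma isAtomic_of_forall_height_ne_top {α : Type*} [PartialOrder α] [OrderBot α]
    (hfin : ∀ x : α, Order.height x ≠ ⊤) : IsAtomic α :=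
  have : WellFoundedLT α := StrictMono.wellFoundedLT (f := Order.height)
    fun x _ hxy ↦ Order.height_strictMono hxy (hfin x).lt_top
  isAtomic_of_orderBot_wellFounded_lt wellFounded_lt

section

variable {α : Type*} [SemilatticeInf α] [OrderBot α]

lemma eq_of_isLUB_bot_pair {s t : α} (h : IsLUB {⊥, t} s) : s = t :=
  le_antisymm (h.2 (by simp [upperBounds])) (h.1 (by simp))

lemma IsAtom.le_or_le_of_isLUB_inf_pair {a b c : α} (ha : IsAtom a)
    (h : IsLUB {a ⊓ b, a ⊓ c} a) : a ≤ b ∨ a ≤ c := by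
  by_contra! hbc
  rw [ha.lt_iff.mp (inf_lt_left.mpr hbc.1), ha.lt_iff.mp (inf_lt_left.mpr hbc.2),
    Set.pair_eq_singleton] at h
  exact ha.1 (h.unique isLUB_singleton)

lemma IsAtom.le_iff_of_isLUB_of_inf_eq_bot
    (hdist : ∀ a b c j : α, IsLUB {b, c} j → IsLUB {a ⊓ b, a ⊓ c} (a ⊓ j))
    {b c x z : α} (hb : IsAtom b) (hc : IsAtom c) (hbz : b ⊓ z = ⊥) (hx : IsLUB {b, z} x) :
    c ≤ z ↔ c ≤ x ∧ c ≠ b := by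
  constructor
  · rintro hcz
    refine ⟨hcz.trans (hx.1 (by simp)), ?_⟩
    rintro rfl
    exact hc.1 (le_bot_iff.mp (hbz ▸ le_inf le_rfl hcz))
  · rintro ⟨hcx, hcb⟩
    have h := hdist c b z x hx
    rw [inf_eq_left.mpr hcx] at h
    exact (hc.le_or_le_of_isLUB_inf_pair h).resolve_left
      fun hcb' ↦ hcb ((hb.le_iff_eq hc.1).mp hcb')

def atomsBelow (x : α) : Set {a : α // IsAtom a} := {a | (a : α) ≤ x}

lemma atomsBelow_eq_diff_of_isLUB
    (hdist : ∀ a b c j : α, IsLUB {b, c} j → IsLUB {a ⊓ b, a ⊓ c} (a ⊓ j))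
    {b : {a : α // IsAtom a}} {x z : α} (hbz : (b : α) ⊓ z = ⊥)
    (hx : IsLUB {(b : α), z} x) :
    atomsBelow z = atomsBelow x \ {b} := by
  ext c
  simpa [atomsBelow, Subtype.ext_iff] using b.2.le_iff_of_isLUB_of_inf_eq_bot hdist c.2 hbz hx

lemma card_le_height_of_subset_atomsBelow
    (hdist : ∀ a b c j : α, IsLUB {b, c} j → IsLUB {a ⊓ b, a ⊓ c} (a ⊓ j))
    (hcompl : ∀ u y : α, y ≤ u → ∃ z : α, z ≤ u ∧ y ⊓ z = ⊥ ∧ IsLUB {y, z} u)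
    (s : Finset {a : α // IsAtom a}) {x : α} (hs : ↑s ⊆ atomsBelow x) :
    (s.card : ℕ∞) ≤ Order.height x := by
  classical
  induction s using Finset.induction_on generalizing x with
  | empty => simp
  | insert b s hbs ih =>
    rw [Finset.coe_insert, Set.insert_subset_iff] at hs
    obtain ⟨z, hz_le, hbz, hlub⟩ := hcompl x b hs.1
    have hz_lt : z < x := hz_le.lt_of_ne fun hzx ↦
      b.2.1 (le_bot_iff.mp (hbz ▸ le_inf le_rfl (hzx ▸ hs.1 : (b : α) ≤ z)))
    have hsz : ↑s ⊆ atomsBelow z := by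
      rw [atomsBelow_eq_diff_of_isLUB hdist hbz hlub]
      exact Set.subset_sdiff_singleton hs.2 hbs
    calc ((insert b s).card : ℕ∞) = s.card + 1 := by simp [hbs]
      _ ≤ Order.height z + 1 := by gcongr; exact ih hsz
      _ ≤ Order.height x := Order.height_add_one_le hz_lt

lemma atomsBelow_finite (hfin : ∀ x : α, Order.height x ≠ ⊤)
    (hdist : ∀ a b c j : α, IsLUB {b, c} j → IsLUB {a ⊓ b, a ⊓ c} (a ⊓ j))
    (hcompl : ∀ u y : α, y ≤ u → ∃ z : α, z ≤ u ∧ y ⊓ z = ⊥ ∧ IsLUB {y, z} u)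
    (x : α) : (atomsBelow x).Finite := by
  refine Set.not_infinite.mp fun h ↦ ?_
  obtain ⟨s, hs, hcard⟩ := h.exists_subset_card_eq ((Order.height x).toNat + 1)
  have := card_le_height_of_subset_atomsBelow hdist hcompl s hs
  lift Order.height x to ℕ using hfin x with n
  rw [hcard, ENat.toNat_natCast, Nat.cast_le] at this
  omega

lemma atomsBelow_subset_atomsBelow_iff [IsAtomic α]
    (hcompl : ∀ u y : α, y ≤ u → ∃ z : α, z ≤ u ∧ y ⊓ z = ⊥ ∧ IsLUB {y, z} u)
    {x y : α} : atomsBelow x ⊆ atomsBelow y ↔ x ≤ y := by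
  refine ⟨fun h ↦ ?_, fun h a ha ↦ le_trans ha h⟩
  obtain ⟨z, hzx, hz, hlub⟩ := hcompl x (x ⊓ y) inf_le_left
  obtain rfl : z = ⊥ := by
    by_contra hz0
    obtain ⟨a, ha, haz⟩ := (eq_bot_or_exists_atom_le z).resolve_left hz0
    have hax : a ≤ x := haz.trans hzx
    have hay : a ≤ y := h (a := ⟨a, ha⟩) hax
    exact ha.1 (le_bot_iff.mp (hz ▸ le_inf (le_inf hax hay) haz))
  rw [Set.pair_comm] at hlub
  exact (eq_of_isLUB_bot_pair hlub ▸ inf_le_right : x ≤ y)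

end

/-- Every locally Boolean meet-semilattice of locally finite height is
order-isomorphic to the face poset (including the empty face, ordered by inclusion) of
some abstract simplicial complex. -/
theorem stmt8 {α : Type u} [SemilatticeInf α] [OrderBot α]
    (hfin : ∀ x : α, Order.height x ≠ ⊤)
    (hdist : ∀ a b c j : α, IsLUB {b, c} j → IsLUB {a ⊓ b, a ⊓ c} (a ⊓ j))
    (hcompl : ∀ u y : α, y ≤ u → ∃ z : α, z ≤ u ∧ y ⊓ z = ⊥ ∧ IsLUB {y, z} u) :
    ∃ (V : Type u) (K : ASC V), Nonempty (α ≃o {σ : Finset V // σ ∈ K.faces}) := by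
  classical
  have := isAtomic_of_forall_height_ne_top hfin
  let face (x : α) : Finset {a : α // IsAtom a} :=
    (atomsBelow_finite hfin hdist hcompl x).toFinset
  let e : α ↪o Finset {a : α // IsAtom a} := .ofMapLEIff face fun x y ↦ by
    simpa [face] using atomsBelow_subset_atomsBelow_iff hcompl
  have erase_mem : ∀ σ ∈ Set.range e, ∀ b ∈ σ, σ.erase b ∈ Set.range e := by
    rintro _ ⟨x, rfl⟩ b hb
    have hbx : b ∈ atomsBelow x := (Set.Finite.mem_toFinset _).mp hb
    obtain ⟨z, -, hbz, hlub⟩ := hcompl x b hbx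
    refine ⟨z, ?_⟩
    ext
    simp [e, face, atomsBelow_eq_diff_of_isLUB hdist hbz hlub, and_comm]
  exact ⟨_, ⟨Set.range e, fun _ _ ↦ Finset.mem_of_subset_of_forall_erase_mem erase_mem⟩,
    ⟨e.orderIso⟩⟩
end

section
/- An abstract simplicial complex K is a flag complex if and only if for any three faces σ₁, σ₂, σ₃ of K such that all pairwise unions σ₁ ∪ σ₂, σ₁ ∪ σ₃, σ₂ ∪ σ₃ are faces of K, the union σ₁ ∪ σ₂ ∪ σ₃ is also a face of K. -/
/-- A flag complex: every finite set of vertices all of whose two-element subsets are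
faces is itself a face. -/
def ASC.IsFlag {V : Type*} [DecidableEq V] (K : ASC V) : Prop :=
  ∀ σ : Finset V, (∀ x ∈ σ, ∀ y ∈ σ, ({x, y} : Finset V) ∈ K.faces) → σ ∈ K.faces

/-!
A union of three faces is a face of a flag complex because each of its edges already lies in
one of the pairwise unions. Conversely, by induction on the size of a set `σ` all of whose edges
are faces: for distinct `x, y ∈ σ`, the sets `σ \ {x, y}`, `{x}` and `{y}` have pairwise unions
`σ.erase y`, `σ.erase x` and `{x, y}`, which are faces, so their union `σ` is a face.
-/

namespace ASC

variable {V : Type*} [DecidableEq V] (K : ASC V)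

def TripleUnionClosed : Prop :=
  ∀ σ₁ ∈ K.faces, ∀ σ₂ ∈ K.faces, ∀ σ₃ ∈ K.faces,
    σ₁ ∪ σ₂ ∈ K.faces → σ₁ ∪ σ₃ ∈ K.faces → σ₂ ∪ σ₃ ∈ K.faces → σ₁ ∪ σ₂ ∪ σ₃ ∈ K.faces

variable {K}

theorem pair_mem_of_mem {τ : Finset V} (hτ : τ ∈ K.faces) {x y : V} (hx : x ∈ τ) (hy : y ∈ τ) :
    ({x, y} : Finset V) ∈ K.faces :=
  K.down_closed hτ (Finset.insert_subset hx (Finset.singleton_subset_iff.mpr hy))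

theorem IsFlag.tripleUnionClosed (hK : K.IsFlag) : K.TripleUnionClosed := by
  intro σ₁ _ σ₂ _ σ₃ _ h₁₂ h₁₃ h₂₃
  refine hK _ fun x hx y hy => ?_
  simp only [Finset.mem_union] at hx hy
  rcases hx with (hx | hx) | hx <;> rcases hy with (hy | hy) | hy
  all_goals first
    | (apply pair_mem_of_mem h₁₂ <;> grind)
    | (apply pair_mem_of_mem h₁₃ <;> grind)
    | (apply pair_mem_of_mem h₂₃ <;> grind)

theorem TripleUnionClosed.mem_of_erase_mem (hK : K.TripleUnionClosed) {σ : Finset V} {x y : V}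
    (hx : x ∈ σ) (hy : y ∈ σ) (hne : x ≠ y)
    (hσx : σ.erase x ∈ K.faces) (hσy : σ.erase y ∈ K.faces)
    (hxy : ({x, y} : Finset V) ∈ K.faces) : σ ∈ K.faces := by
  have hunion := hK ((σ.erase x).erase y) (K.down_closed hσx (Finset.erase_subset _ _))
    {x} (K.down_closed hxy (by simp)) {y} (K.down_closed hxy (by simp))
    (K.down_closed hσy (by grind)) (K.down_closed hσx (by grind)) (by rwa [Finset.singleton_union])
  exact K.down_closed hunion (by grind)

theorem TripleUnionClosed.isFlag (hK : K.TripleUnionClosed) (hempty : ∅ ∈ K.faces) :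
    K.IsFlag := by
  intro σ hedges
  induction σ using Finset.strongInduction with
  | _ σ ih =>
    have ih_erase : ∀ a ∈ σ, σ.erase a ∈ K.faces := fun a ha =>
      ih _ (Finset.erase_ssubset ha) fun x hx y hy =>
        hedges x (Finset.mem_of_mem_erase hx) y (Finset.mem_of_mem_erase hy)
    obtain rfl | hσ := σ.eq_empty_or_nonempty
    · exact hempty
    obtain ⟨x, rfl⟩ | ⟨x, hx, y, hy, hne⟩ := hσ.exists_eq_singleton_or_nontrivial
    · simpa using hedges x (by simp) x (by simp)
    · exact hK.mem_of_erase_mem hx hy hne (ih_erase x hx) (ih_erase y hy) (hedges x hx y hy)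

end ASC

/-- A (nonempty) abstract simplicial complex `K` is a flag complex iff for
any three faces whose pairwise unions are faces, the union of all three is a face. -/
theorem stmt9 {V : Type*} [DecidableEq V] (K : ASC V)
    (hne : (∅ : Finset V) ∈ K.faces) :
    K.IsFlag ↔ ∀ σ₁ ∈ K.faces, ∀ σ₂ ∈ K.faces, ∀ σ₃ ∈ K.faces,
      σ₁ ∪ σ₂ ∈ K.faces → σ₁ ∪ σ₃ ∈ K.faces → σ₂ ∪ σ₃ ∈ K.faces →
        σ₁ ∪ σ₂ ∪ σ₃ ∈ K.faces :=
  ⟨ASC.IsFlag.tripleUnionClosed, fun hK => ASC.TripleUnionClosed.isFlag hK hne⟩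
end

section
/- Let K be an abstract simplicial complex with a partial order on its vertex set that is compatible (the down-closure of every face is a face). Then the face poset F(K) is a flag meet-semilattice if and only if the poset DF(K) of down-closed faces is a flag meet-semilattice; and both are equivalent to K being a flag complex. -/
/-- A down-closed face of `K` (w.r.t. a partial order on the vertices): a face which is a
down set of the vertex order. -/
def DCFace {V : Type*} [PartialOrder V] (K : ASC V) (σ : Finset V) : Prop :=
  σ ∈ K.faces ∧ ∀ x ∈ σ, ∀ y : V, y ≤ x → y ∈ σ

/-- The face poset `F(K)` is a flag semilattice: every pairwise bounded triple of faces
is bounded (a set of faces is bounded iff it is contained in a common face). -/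
def FlagF {V : Type*} [DecidableEq V] (K : ASC V) : Prop :=
  ∀ σ₁ ∈ K.faces, ∀ σ₂ ∈ K.faces, ∀ σ₃ ∈ K.faces,
    (∃ ρ ∈ K.faces, σ₁ ∪ σ₂ ⊆ ρ) → (∃ ρ ∈ K.faces, σ₁ ∪ σ₃ ⊆ ρ) →
      (∃ ρ ∈ K.faces, σ₂ ∪ σ₃ ⊆ ρ) → ∃ ρ ∈ K.faces, σ₁ ∪ σ₂ ∪ σ₃ ⊆ ρ

/-- The poset `DF(K)` of down-closed faces is a flag semilattice. -/
def FlagDF {V : Type*} [DecidableEq V] [PartialOrder V] (K : ASC V) : Prop :=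
  ∀ σ₁, DCFace K σ₁ → ∀ σ₂, DCFace K σ₂ → ∀ σ₃, DCFace K σ₃ →
    (∃ ρ, DCFace K ρ ∧ σ₁ ∪ σ₂ ⊆ ρ) → (∃ ρ, DCFace K ρ ∧ σ₁ ∪ σ₃ ⊆ ρ) →
      (∃ ρ, DCFace K ρ ∧ σ₂ ∪ σ₃ ⊆ ρ) → ∃ ρ, DCFace K ρ ∧ σ₁ ∪ σ₂ ∪ σ₃ ⊆ ρ

namespace Stmt12Aux
variable {V : Type*} [DecidableEq V]

lemma union_face (K : ASC V) (hK : K.IsFlag)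
    {σ₁ σ₂ σ₃ ρ₁₂ ρ₁₃ ρ₂₃ : Finset V}
    (h12 : ρ₁₂ ∈ K.faces) (h13 : ρ₁₃ ∈ K.faces) (h23 : ρ₂₃ ∈ K.faces)
    (s12 : σ₁ ∪ σ₂ ⊆ ρ₁₂) (s13 : σ₁ ∪ σ₃ ⊆ ρ₁₃) (s23 : σ₂ ∪ σ₃ ⊆ ρ₂₃) :
    σ₁ ∪ σ₂ ∪ σ₃ ∈ K.faces := by
  apply hK
  intro x hx y hy
  simp only [Finset.mem_union] at hx hy
  have pair : ∀ ρ ∈ K.faces, x ∈ ρ → y ∈ ρ → ({x, y} : Finset V) ∈ K.faces := by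
    intro ρ hρ hxρ hyρ
    exact K.down_closed hρ (by simp [Finset.insert_subset_iff, hxρ, hyρ])
  rcases hx with (hx | hx) | hx <;> rcases hy with (hy | hy) | hy
  · exact pair _ h12 (s12 (Finset.mem_union_left _ hx)) (s12 (Finset.mem_union_left _ hy))
  · exact pair _ h12 (s12 (Finset.mem_union_left _ hx)) (s12 (Finset.mem_union_right _ hy))
  · exact pair _ h13 (s13 (Finset.mem_union_left _ hx)) (s13 (Finset.mem_union_right _ hy))
  · exact pair _ h12 (s12 (Finset.mem_union_right _ hx)) (s12 (Finset.mem_union_left _ hy))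
  · exact pair _ h12 (s12 (Finset.mem_union_right _ hx)) (s12 (Finset.mem_union_right _ hy))
  · exact pair _ h23 (s23 (Finset.mem_union_left _ hx)) (s23 (Finset.mem_union_right _ hy))
  · exact pair _ h13 (s13 (Finset.mem_union_right _ hx)) (s13 (Finset.mem_union_left _ hy))
  · exact pair _ h23 (s23 (Finset.mem_union_right _ hx)) (s23 (Finset.mem_union_left _ hy))
  · exact pair _ h23 (s23 (Finset.mem_union_right _ hx)) (s23 (Finset.mem_union_right _ hy))

lemma dcl [PartialOrder V] (K : ASC V)
    (hcompat : ∀ σ ∈ K.faces, ∃ τ ∈ K.faces, ∀ x : V, x ∈ τ ↔ ∃ y ∈ σ, x ≤ y)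
    {σ : Finset V} (hσ : σ ∈ K.faces) :
    ∃ τ, DCFace K τ ∧ σ ⊆ τ ∧ ∀ ρ, DCFace K ρ → σ ⊆ ρ → τ ⊆ ρ := by
  obtain ⟨τ, hτ, hmem⟩ := hcompat σ hσ
  refine ⟨τ, ⟨hτ, ?_⟩, ?_, ?_⟩
  · intro x hx y hy
    obtain ⟨z, hz, hxz⟩ := (hmem x).1 hx
    exact (hmem y).2 ⟨z, hz, hy.trans hxz⟩
  · intro x hx; exact (hmem x).2 ⟨x, hx, le_refl x⟩
  · intro ρ hρ hsub x hx
    obtain ⟨z, hz, hxz⟩ := (hmem x).1 hx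
    exact hρ.2 z (hsub hz) x hxz

lemma flagF_isFlag (K : ASC V) (hemp : ∅ ∈ K.faces) (h : FlagF K) : K.IsFlag := by
  intro σ
  induction σ using Finset.strongInduction with
  | _ σ ih =>
    intro hp
    rcases σ.eq_empty_or_nonempty with rfl | ⟨a, ha⟩
    · exact hemp
    by_cases h1 : ∃ b ∈ σ, b ≠ a
    · obtain ⟨b, hb, hba⟩ := h1
      have hab : a ≠ b := fun h => hba h.symm
      have hpab : ({a, b} : Finset V) ∈ K.faces := hp a ha b hb
      have hface : ∀ τ ⊂ σ, τ ∈ K.faces := fun τ hτ =>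
        ih τ hτ (fun x hx y hy => hp x (hτ.1 hx) y (hτ.1 hy))
      have hssub : ∀ c ∈ σ, ∀ t : Finset V, c ∈ t → σ \ t ⊂ σ := by
        intro c hc t hct
        exact (Finset.ssubset_iff_of_subset Finset.sdiff_subset).2
          ⟨c, hc, by simp [hct]⟩
      have f1 : σ \ {a, b} ∈ K.faces := hface _ (hssub a ha _ (by simp))
      have f2 : ({a} : Finset V) ∈ K.faces := K.down_closed hpab (by simp)
      have f3 : ({b} : Finset V) ∈ K.faces := K.down_closed hpab (by simp)
      have fb : σ \ {b} ∈ K.faces := hface _ (hssub b hb _ (by simp))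
      have fa : σ \ {a} ∈ K.faces := hface _ (hssub a ha _ (by simp))
      have s12 : (σ \ {a, b}) ∪ {a} ⊆ σ \ {b} := by
        intro x hx
        simp only [Finset.mem_union, Finset.mem_sdiff, Finset.mem_insert,
          Finset.mem_singleton] at hx ⊢
        rcases hx with ⟨hxσ, hne⟩ | rfl
        · exact ⟨hxσ, fun h => hne (Or.inr h)⟩
        · exact ⟨ha, hab⟩
      have s13 : (σ \ {a, b}) ∪ {b} ⊆ σ \ {a} := by
        intro x hx
        simp only [Finset.mem_union, Finset.mem_sdiff, Finset.mem_insert,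
          Finset.mem_singleton] at hx ⊢
        rcases hx with ⟨hxσ, hne⟩ | rfl
        · exact ⟨hxσ, fun h => hne (Or.inl h)⟩
        · exact ⟨hb, hba⟩
      have s23 : ({a} : Finset V) ∪ {b} ⊆ {a, b} := by
        intro x hx; simp only [Finset.mem_union, Finset.mem_singleton] at hx
        simp [hx]
      obtain ⟨ρ, hρ, hsub⟩ := h _ f1 _ f2 _ f3 ⟨_, fb, s12⟩ ⟨_, fa, s13⟩ ⟨_, hpab, s23⟩
      refine K.down_closed hρ (fun x hx => hsub ?_)
      simp only [Finset.mem_union, Finset.mem_sdiff, Finset.mem_insert,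
        Finset.mem_singleton]
      by_cases hxa : x = a
      · tauto
      by_cases hxb : x = b
      · tauto
      · tauto
    · push_neg at h1
      have : σ ⊆ {a} := fun x hx => by simp [h1 x hx]
      have haa : ({a} : Finset V) ∈ K.faces := by
        have := hp a ha a ha; simpa using this
      exact K.down_closed haa this

lemma flagDF_isFlag [PartialOrder V] (K : ASC V) (hemp : ∅ ∈ K.faces)
    (hcompat : ∀ σ ∈ K.faces, ∃ τ ∈ K.faces, ∀ x : V, x ∈ τ ↔ ∃ y ∈ σ, x ≤ y)
    (h : FlagDF K) : K.IsFlag := by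
  intro σ
  induction σ using Finset.strongInduction with
  | _ σ ih =>
    intro hp
    rcases σ.eq_empty_or_nonempty with rfl | ⟨a, ha⟩
    · exact hemp
    by_cases h1 : ∃ b ∈ σ, b ≠ a
    · obtain ⟨b, hb, hba⟩ := h1
      have hab : a ≠ b := fun h => hba h.symm
      have hpab : ({a, b} : Finset V) ∈ K.faces := hp a ha b hb
      have hface : ∀ τ ⊂ σ, τ ∈ K.faces := fun τ hτ =>
        ih τ hτ (fun x hx y hy => hp x (hτ.1 hx) y (hτ.1 hy))
      have hssub : ∀ c ∈ σ, ∀ t : Finset V, c ∈ t → σ \ t ⊂ σ := by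
        intro c hc t hct
        exact (Finset.ssubset_iff_of_subset Finset.sdiff_subset).2
          ⟨c, hc, by simp [hct]⟩
      have f1 : σ \ {a, b} ∈ K.faces := hface _ (hssub a ha _ (by simp))
      have f2 : ({a} : Finset V) ∈ K.faces := K.down_closed hpab (by simp)
      have f3 : ({b} : Finset V) ∈ K.faces := K.down_closed hpab (by simp)
      have fb : σ \ {b} ∈ K.faces := hface _ (hssub b hb _ (by simp))
      have fa : σ \ {a} ∈ K.faces := hface _ (hssub a ha _ (by simp))
      obtain ⟨δ₁, hδ₁, hs₁, hmin₁⟩ := dcl K hcompat f1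
      obtain ⟨δ₂, hδ₂, hs₂, hmin₂⟩ := dcl K hcompat f2
      obtain ⟨δ₃, hδ₃, hs₃, hmin₃⟩ := dcl K hcompat f3
      obtain ⟨βb, hβb, hsb, _⟩ := dcl K hcompat fb
      obtain ⟨βa, hβa, hsa, _⟩ := dcl K hcompat fa
      obtain ⟨βab, hβab, hsab, _⟩ := dcl K hcompat hpab
      have b12 : δ₁ ∪ δ₂ ⊆ βb := by
        apply Finset.union_subset
        · exact hmin₁ _ hβb (fun x hx => hsb (by
            simp only [Finset.mem_sdiff, Finset.mem_insert, Finset.mem_singleton] at hx ⊢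
            exact ⟨hx.1, fun h => hx.2 (Or.inr h)⟩))
        · exact hmin₂ _ hβb (fun x hx => hsb (by
            simp only [Finset.mem_singleton] at hx
            subst hx; simp [ha, hab]))
      have b13 : δ₁ ∪ δ₃ ⊆ βa := by
        apply Finset.union_subset
        · exact hmin₁ _ hβa (fun x hx => hsa (by
            simp only [Finset.mem_sdiff, Finset.mem_insert, Finset.mem_singleton] at hx ⊢
            exact ⟨hx.1, fun h => hx.2 (Or.inl h)⟩))
        · exact hmin₃ _ hβa (fun x hx => hsa (by
            simp only [Finset.mem_singleton] at hx
            subst hx; simp [hb, hba]))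
      have b23 : δ₂ ∪ δ₃ ⊆ βab := by
        apply Finset.union_subset
        · exact hmin₂ _ hβab (fun x hx => hsab (by
            simp only [Finset.mem_singleton] at hx; simp [hx]))
        · exact hmin₃ _ hβab (fun x hx => hsab (by
            simp only [Finset.mem_singleton] at hx; simp [hx]))
      obtain ⟨ρ, hρ, hsub⟩ := h _ hδ₁ _ hδ₂ _ hδ₃ ⟨_, hβb, b12⟩ ⟨_, hβa, b13⟩ ⟨_, hβab, b23⟩
      refine K.down_closed hρ.1 (fun x hx => hsub ?_)
      simp only [Finset.mem_union]
      by_cases hxa : x = a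
      · exact Or.inl (Or.inr (hs₂ (by simp [hxa])))
      by_cases hxb : x = b
      · exact Or.inr (hs₃ (by simp [hxb]))
      · exact Or.inl (Or.inl (hs₁ (by simp [Finset.mem_sdiff, hx, hxa, hxb])))
    · push_neg at h1
      have : σ ⊆ {a} := fun x hx => by simp [h1 x hx]
      have haa : ({a} : Finset V) ∈ K.faces := by
        have := hp a ha a ha; simpa using this
      exact K.down_closed haa this

lemma isFlag_flagF (K : ASC V) (hK : K.IsFlag) : FlagF K := by
  intro σ₁ h1 σ₂ h2 σ₃ h3 ⟨ρ₁₂, h12, s12⟩ ⟨ρ₁₃, h13, s13⟩ ⟨ρ₂₃, h23, s23⟩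
  exact ⟨_, union_face K hK h12 h13 h23 s12 s13 s23, subset_rfl⟩

lemma isFlag_flagDF [PartialOrder V] (K : ASC V) (hK : K.IsFlag) : FlagDF K := by
  intro σ₁ h1 σ₂ h2 σ₃ h3 ⟨ρ₁₂, h12, s12⟩ ⟨ρ₁₃, h13, s13⟩ ⟨ρ₂₃, h23, s23⟩
  refine ⟨σ₁ ∪ σ₂ ∪ σ₃, ⟨union_face K hK h12.1 h13.1 h23.1 s12 s13 s23, ?_⟩, subset_rfl⟩
  intro x hx y hy
  simp only [Finset.mem_union] at hx ⊢
  rcases hx with (hx | hx) | hx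
  · exact Or.inl (Or.inl (h1.2 x hx y hy))
  · exact Or.inl (Or.inr (h2.2 x hx y hy))
  · exact Or.inr (h3.2 x hx y hy)

end Stmt12Aux

/-- For a (nonempty) abstract simplicial complex `K` with a compatible
partial order on its vertices (the down-closure of every face is a face), `F(K)` is a
flag semilattice iff `DF(K)` is a flag semilattice, and both are equivalent to `K` being
a flag complex. -/
theorem stmt12 {V : Type*} [DecidableEq V] [PartialOrder V] (K : ASC V)
    (hne : K.faces.Nonempty)
    (hcompat : ∀ σ ∈ K.faces, ∃ τ ∈ K.faces, ∀ x : V, x ∈ τ ↔ ∃ y ∈ σ, x ≤ y) :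
    (FlagF K ↔ FlagDF K) ∧ (FlagF K ↔ K.IsFlag) := by
  obtain ⟨σ₀, hσ₀⟩ := hne
  have hemp : ∅ ∈ K.faces := K.down_closed hσ₀ (Finset.empty_subset _)
  have hF : FlagF K ↔ K.IsFlag :=
    ⟨Stmt12Aux.flagF_isFlag K hemp, Stmt12Aux.isFlag_flagF K⟩
  have hDF : FlagDF K ↔ K.IsFlag :=
    ⟨Stmt12Aux.flagDF_isFlag K hemp hcompat, Stmt12Aux.isFlag_flagDF K⟩
  exact ⟨hF.trans hDF.symm, hF⟩
end

section
/- Let K be a finite-dimensional abstract simplicial complex and let CC(K) = ∪_{σ ∈ K} I^σ be its cubical cone, where I^σ = {∑_{v∈σ} t_v v : t_v ∈ [0,1]} inside the real vector space freely generated by the vertices. Then the vertices of the cubical cone CC(K) (points of the form ∑_{v∈σ} v) are exactly the indicator vectors χ_σ for faces σ of K, and the cubical link of χ_σ in CC(K) is isomorphic to the simplicial join of the full simplex on σ with the link lk(σ; K). -/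
/-- The indicator vector `χ_σ = ∑_{v ∈ σ} v` in the free real vector space on `V`. -/
noncomputable def chi {V : Type*} (σ : Finset V) : V →₀ ℝ :=
  σ.sum fun v => Finsupp.single v 1

/-- The cubical cone `CC(K) = ∪_{σ ∈ K} I^σ`, where
`I^σ = {∑_{v ∈ σ} t_v v : t_v ∈ [0,1]}`. -/
def CC {V : Type*} (K : ASC V) : Set (V →₀ ℝ) :=
  {f | ∃ σ ∈ K.faces, f.support ⊆ σ ∧ ∀ v : V, 0 ≤ f v ∧ f v ≤ 1}

/-- Two vertices `χ_σ`, `χ_τ` of the cubical cone are adjacent iff `σ`, `τ` and `σ ∪ τ`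
are faces and `σ`, `τ` differ in exactly one element (they then span a common edge). -/
def Adj {V : Type*} [DecidableEq V] (K : ASC V) (σ τ : Finset V) : Prop :=
  σ ∈ K.faces ∧ τ ∈ K.faces ∧ σ ∪ τ ∈ K.faces ∧ (symmDiff σ τ).card = 1

/-- A face of the cubical link of the vertex `χ_σ` in `CC(K)`: a finite set of vertices
adjacent to `χ_σ` lying with `χ_σ` in a common cube `I^ρ`. -/
def CubLinkFace {V : Type*} [DecidableEq V] (K : ASC V) (σ : Finset V)
    (A : Finset (Finset V)) : Prop :=
  (∀ τ ∈ A, Adj K σ τ) ∧ ∃ ρ ∈ K.faces, σ ⊆ ρ ∧ ∀ τ ∈ A, τ ⊆ ρ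

lemma chi_apply {V : Type*} [DecidableEq V] (τ : Finset V) (v : V) :
    chi τ v = if v ∈ τ then 1 else 0 := by
  classical
  simp [chi, Finsupp.finset_sum_apply, Finsupp.single_apply]

lemma symmDiff_card_one {V : Type*} [DecidableEq V] {σ τ : Finset V}
    (h : (symmDiff σ τ).card = 1) :
    (∃ v ∈ σ, τ = σ.erase v) ∨ (∃ w ∉ σ, τ = insert w σ) := by
  obtain ⟨x, hx⟩ := Finset.card_eq_one.mp h
  have hmem : ∀ y, (y ∈ σ ∧ y ∉ τ ∨ y ∈ τ ∧ y ∉ σ) ↔ y = x := by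
    intro y
    rw [← Finset.mem_symmDiff, hx, Finset.mem_singleton]
  by_cases hxσ : x ∈ σ
  · have hxτ : x ∉ τ := by have := (hmem x).mpr rfl; tauto
    left
    refine ⟨x, hxσ, ?_⟩
    ext y
    simp only [Finset.mem_erase]
    constructor
    · intro hy
      have h1 : y ≠ x := fun e => hxτ (e ▸ hy)
      have h2 : y ∈ σ := by
        by_contra hns
        exact h1 ((hmem y).mp (Or.inr ⟨hy, hns⟩))
      exact ⟨h1, h2⟩
    · rintro ⟨h1, h2⟩
      by_contra hnt
      exact h1 ((hmem y).mp (Or.inl ⟨h2, hnt⟩))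
  · have hxτ : x ∈ τ := by have := (hmem x).mpr rfl; tauto
    right
    refine ⟨x, hxσ, ?_⟩
    ext y
    simp only [Finset.mem_insert]
    constructor
    · intro hy
      by_cases hys : y ∈ σ
      · exact Or.inr hys
      · exact Or.inl ((hmem y).mp (Or.inr ⟨hy, hys⟩))
    · rintro (rfl | hys)
      · exact hxτ
      · by_contra hnt
        exact hxσ (((hmem y).mp (Or.inl ⟨hys, hnt⟩)) ▸ hys)

lemma symmDiff_erase {V : Type*} [DecidableEq V] {σ : Finset V} {v : V} (hv : v ∈ σ) :
    (symmDiff σ (σ.erase v)).card = 1 := by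
  have : symmDiff σ (σ.erase v) = {v} := by
    ext y
    simp only [Finset.mem_symmDiff, Finset.mem_erase, Finset.mem_singleton]
    constructor
    · rintro (⟨h1, h2⟩ | ⟨⟨h1, h2⟩, h3⟩)
      · by_contra hne; exact h2 ⟨hne, h1⟩
      · exact absurd h2 h3
    · rintro rfl
      exact Or.inl ⟨hv, fun h => h.1 rfl⟩
  rw [this, Finset.card_singleton]

lemma symmDiff_insert {V : Type*} [DecidableEq V] {σ : Finset V} {w : V} (hw : w ∉ σ) :
    (symmDiff σ (insert w σ)).card = 1 := by
  have : symmDiff σ (insert w σ) = {w} := by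
    ext y
    simp only [Finset.mem_symmDiff, Finset.mem_insert, Finset.mem_singleton]
    constructor
    · rintro (⟨h1, h2⟩ | ⟨(rfl | h1), h2⟩)
      · exact absurd (Or.inr h1) h2
      · rfl
      · exact absurd h1 h2
    · rintro rfl
      exact Or.inr ⟨Or.inl rfl, hw⟩
  rw [this, Finset.card_singleton]

/-- For a finite-dimensional abstract simplicial complex `K`:
(a) the vertices of the cubical cone `CC(K)` (the points all of whose coordinates are
`0` or `1`) are exactly the indicator vectors `χ_σ` of faces `σ` of `K`;
(b) the cubical link of `χ_σ` in `CC(K)` is isomorphic to the simplicial join of the full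
simplex on `σ` with the link `lk(σ; K)`: its faces are exactly the sets
`{σ \ {v} : v ∈ τ₁} ∪ {σ ∪ {w} : w ∈ τ₂}` with `τ₁ ⊆ σ` and `τ₂` a face of `lk(σ; K)`. -/
theorem stmt15 {V : Type*} [DecidableEq V] (K : ASC V)
    (hfd : ∃ n : ℕ, ∀ σ ∈ K.faces, σ.card ≤ n)
    (σ : Finset V) (hσ : σ ∈ K.faces) :
    ({f | f ∈ CC K ∧ ∀ v : V, f v = 0 ∨ f v = 1} = {f | ∃ τ ∈ K.faces, f = chi τ}) ∧
    (∀ A : Finset (Finset V), CubLinkFace K σ A ↔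
      ∃ τ₁ ⊆ σ, ∃ τ₂ : Finset V, σ ∩ τ₂ = ∅ ∧ σ ∪ τ₂ ∈ K.faces ∧
        A = τ₁.image (σ.erase ·) ∪ τ₂.image (fun w => insert w σ)) := by
  classical
  constructor
  · -- part (a)
    ext f
    simp only [Set.mem_setOf_eq]
    constructor
    · rintro ⟨⟨ρ, hρ, hsupp, _⟩, h01⟩
      refine ⟨f.support, K.down_closed hρ hsupp, ?_⟩
      ext v
      rw [chi_apply]
      rcases h01 v with h0 | h1
      · rw [h0]
        have : v ∉ f.support := by simp [Finsupp.mem_support_iff, h0]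
        simp [this]
      · rw [h1]
        have : v ∈ f.support := by simp [Finsupp.mem_support_iff, h1]
        simp [this]
    · rintro ⟨τ, hτ, rfl⟩
      refine ⟨⟨τ, hτ, ?_, ?_⟩, ?_⟩
      · intro v hv
        rw [Finsupp.mem_support_iff, chi_apply] at hv
        by_contra h
        simp [h] at hv
      · intro v
        rw [chi_apply]
        split <;> norm_num
      · intro v
        rw [chi_apply]
        split <;> simp
  · -- part (b)
    intro A
    constructor
    · rintro ⟨hadj, ρ, hρ, hσρ, hAρ⟩
      refine ⟨σ.filter (fun v => σ.erase v ∈ A), Finset.filter_subset _ _,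
        (ρ \ σ).filter (fun w => insert w σ ∈ A), ?_, ?_, ?_⟩
      · ext y
        simp only [Finset.mem_inter, Finset.mem_filter, Finset.mem_sdiff,
          Finset.notMem_empty, iff_false]
        tauto
      · refine K.down_closed hρ ?_
        intro y hy
        rcases Finset.mem_union.mp hy with h | h
        · exact hσρ h
        · exact (Finset.mem_sdiff.mp (Finset.mem_filter.mp h).1).1
      · ext τ
        simp only [Finset.mem_union, Finset.mem_image, Finset.mem_filter, Finset.mem_sdiff]
        constructor
        · intro hτ
          obtain ⟨_, _, _, hsd⟩ := hadj τ hτ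
          rcases symmDiff_card_one hsd with ⟨v, hv, rfl⟩ | ⟨w, hw, rfl⟩
          · exact Or.inl ⟨v, ⟨hv, hτ⟩, rfl⟩
          · exact Or.inr ⟨w, ⟨⟨hAρ _ hτ (Finset.mem_insert_self w σ), hw⟩, hτ⟩, rfl⟩
        · rintro (⟨v, ⟨_, hv⟩, rfl⟩ | ⟨w, ⟨_, hw⟩, rfl⟩)
          · exact hv
          · exact hw
    · rintro ⟨τ₁, hτ₁, τ₂, hdisj, hface, rfl⟩
      have hdisj' : ∀ w ∈ τ₂, w ∉ σ := by
        intro w hw hws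
        have : w ∈ σ ∩ τ₂ := Finset.mem_inter.mpr ⟨hws, hw⟩
        rw [hdisj] at this
        exact Finset.notMem_empty w this
      constructor
      · intro τ hτ
        rcases Finset.mem_union.mp hτ with h | h
        · obtain ⟨v, hv, rfl⟩ := Finset.mem_image.mp h
          have hvσ : v ∈ σ := hτ₁ hv
          refine ⟨hσ, K.down_closed hσ (Finset.erase_subset _ _), ?_, symmDiff_erase hvσ⟩
          have : σ ∪ σ.erase v = σ := Finset.union_eq_left.mpr (Finset.erase_subset _ _)
          rw [this]; exact hσ
        · obtain ⟨w, hw, rfl⟩ := Finset.mem_image.mp h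
          have hwσ : w ∉ σ := hdisj' w hw
          have hins : insert w σ ⊆ σ ∪ τ₂ := by
            intro y hy
            rcases Finset.mem_insert.mp hy with rfl | hy
            · exact Finset.mem_union_right _ hw
            · exact Finset.mem_union_left _ hy
          refine ⟨hσ, K.down_closed hface hins, ?_, symmDiff_insert hwσ⟩
          have : σ ∪ insert w σ = insert w σ :=
            Finset.union_eq_right.mpr (Finset.subset_insert _ _)
          rw [this]; exact K.down_closed hface hins
      · refine ⟨σ ∪ τ₂, hface, Finset.subset_union_left, ?_⟩
        intro τ hτ
        rcases Finset.mem_union.mp hτ with h | h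
        · obtain ⟨v, _, rfl⟩ := Finset.mem_image.mp h
          exact (Finset.erase_subset _ _).trans Finset.subset_union_left
        · obtain ⟨w, hw, rfl⟩ := Finset.mem_image.mp h
          intro y hy
          rcases Finset.mem_insert.mp hy with rfl | hy
          · exact Finset.mem_union_right _ hw
          · exact Finset.mem_union_left _ hy
end

section
/- Let K be a finite-dimensional abstract simplicial complex with a compatible partial order on its vertices, and let X = {∑_{u} t_u u ∈ CC(K) : t_v ≥ t_w whenever v ≤ w in V(K)} be the subset of the cubical cone corresponding to down-closed configurations. For each pair v < w of vertices, the map ψ_{vw} replacing (t_v, t_w) by (max{t_v, (t_v+t_w)/2}, min{t_w, (t_v+t_w)/2}) and fixing other coordinates maps CC(K) into CC(K), is the nearest-point projection of the ambient Euclidean space onto the half-space {t_v ≥ t_w}, and restricts to a non-expanding retraction of CC(K) onto CC(K) ∩ {t_v ≥ t_w}. -/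
/-- Squared Euclidean distance on the free real vector space on `V`. -/
noncomputable def dsq {V : Type*} (f g : V →₀ ℝ) : ℝ :=
  (f - g).sum fun _ c => c ^ 2

/-- Euclidean distance on the free real vector space on `V`. -/
noncomputable def eudist {V : Type*} (f g : V →₀ ℝ) : ℝ :=
  Real.sqrt (dsq f g)

/-- The intrinsic (length) pseudo-metric of the cubical cone: the infimum of lengths of
strings, i.e. finite sequences of points of `CC(K)` in which any two consecutive points lie
in a common cube `I^σ`. -/
noncomputable def intrDist {V : Type*} (K : ASC V) (x y : V →₀ ℝ) : ℝ :=
  sInf {L | ∃ p : List (V →₀ ℝ), p ≠ [] ∧ p.head? = some x ∧ p.getLast? = some y ∧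
    (∀ f ∈ p, f ∈ CC K) ∧
    List.Chain' (fun f g => ∃ σ ∈ K.faces, f.support ⊆ σ ∧ g.support ⊆ σ ∧
      (∀ v : V, 0 ≤ f v ∧ f v ≤ 1) ∧ (∀ v : V, 0 ≤ g v ∧ g v ≤ 1)) p ∧
    L = ((p.zip p.tail).map fun q => eudist q.1 q.2).sum}

/-- The closed half-space `{t_w ≤ t_v}`. -/
def halfSpace {V : Type*} (v w : V) : Set (V →₀ ℝ) := {f | f w ≤ f v}

/-- The map `ψ_{vw}` replacing the coordinates `(t_v, t_w)` by
`(max {t_v, (t_v+t_w)/2}, min {t_w, (t_v+t_w)/2})` and fixing all other coordinates. -/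
noncomputable def psi {V : Type*} [DecidableEq V] (v w : V) (f : V →₀ ℝ) : V →₀ ℝ :=
  (f.update v (max (f v) ((f v + f w) / 2))).update w (min (f w) ((f v + f w) / 2))

noncomputable def foldFst (a b : ℝ) : ℝ := max a ((a + b) / 2)

noncomputable def foldSnd (a b : ℝ) : ℝ := min b ((a + b) / 2)

section Fold

variable {a b : ℝ}

lemma foldFst_of_le (h : b ≤ a) : foldFst a b = a := max_eq_left (by linarith)

lemma foldSnd_of_le (h : b ≤ a) : foldSnd a b = b := min_eq_left (by linarith)

lemma foldFst_of_ge (h : a ≤ b) : foldFst a b = (a + b) / 2 := max_eq_right (by linarith)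

lemma foldSnd_of_ge (h : a ≤ b) : foldSnd a b = (a + b) / 2 := min_eq_right (by linarith)

lemma foldSnd_le_foldFst (a b : ℝ) : foldSnd a b ≤ foldFst a b :=
  (min_le_right _ _).trans (le_max_right _ _)

/-- The obtuse-angle criterion characterising `(foldFst a b, foldSnd a b)` as the nearest point
of the half-plane `{y ≤ x}` to `(a, b)`. -/
lemma fold_inner_nonneg {x y : ℝ} (hyx : y ≤ x) :
    0 ≤ (a - foldFst a b) * (foldFst a b - x) + (b - foldSnd a b) * (foldSnd a b - y) := by
  rcases le_total b a with h | h
  · simp [foldFst_of_le h, foldSnd_of_le h]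
  · rw [foldFst_of_ge h, foldSnd_of_ge h]
    nlinarith

lemma fold_pythagoras {x y : ℝ} (hyx : y ≤ x) :
    (a - foldFst a b) ^ 2 + (b - foldSnd a b) ^ 2 + ((foldFst a b - x) ^ 2 + (foldSnd a b - y) ^ 2)
      ≤ (a - x) ^ 2 + (b - y) ^ 2 := by
  nlinarith [fold_inner_nonneg (a := a) (b := b) hyx]

/-- Non-expansiveness follows from the obtuse-angle criterion at both points, as for any
nearest-point projection onto a convex set. -/
lemma fold_dist_le (a b c d : ℝ) :
    (foldFst a b - foldFst c d) ^ 2 + (foldSnd a b - foldSnd c d) ^ 2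
      ≤ (a - c) ^ 2 + (b - d) ^ 2 := by
  nlinarith [fold_inner_nonneg (a := a) (b := b) (foldSnd_le_foldFst c d),
    fold_inner_nonneg (a := c) (b := d) (foldSnd_le_foldFst a b),
    sq_nonneg (a - c - (foldFst a b - foldFst c d)),
    sq_nonneg (b - d - (foldSnd a b - foldSnd c d))]

end Fold

section Dist

variable {V : Type*}

lemma dsq_nonneg (f g : V →₀ ℝ) : 0 ≤ dsq f g :=
  Finset.sum_nonneg fun _ _ => sq_nonneg _

lemma dsq_self (f : V →₀ ℝ) : dsq f f = 0 := by
  simp [dsq]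

lemma eq_of_dsq_eq_zero {f g : V →₀ ℝ} (h : dsq f g = 0) : f = g := by
  rw [dsq, Finsupp.sum, Finset.sum_eq_zero_iff_of_nonneg fun _ _ => sq_nonneg _] at h
  rw [← sub_eq_zero, ← Finsupp.support_eq_empty, Finset.eq_empty_iff_forall_notMem]
  intro u hu
  exact Finsupp.mem_support_iff.mp hu (pow_eq_zero_iff two_ne_zero |>.mp (h u hu))

lemma dsq_eq_sum_add_sum [DecidableEq V] (t : Finset V) (f g : V →₀ ℝ) :
    dsq f g = ∑ u ∈ t, (f u - g u) ^ 2 + ∑ u ∈ (f - g).support \ t, (f u - g u) ^ 2 := by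
  rw [← Finset.sum_union Finset.disjoint_sdiff, Finset.union_sdiff_self_eq_union, dsq,
    Finsupp.sum, Finset.sum_subset (Finset.subset_union_right (s₁ := t))]
  · simp only [Finsupp.sub_apply]
  · intro u _ hu
    rw [Finsupp.notMem_support_iff.mp hu, zero_pow two_ne_zero]

lemma dsq_sub_sum_eq_of_eqOn [DecidableEq V] {t : Finset V} {f g f' g' : V →₀ ℝ}
    (h : ∀ u ∉ t, f' u - g' u = f u - g u) :
    dsq f' g' - ∑ u ∈ t, (f' u - g' u) ^ 2 = dsq f g - ∑ u ∈ t, (f u - g u) ^ 2 := by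
  have hsupp : (f' - g').support \ t = (f - g).support \ t := by
    ext u
    by_cases hu : u ∈ t <;> simp [hu, h]
  rw [dsq_eq_sum_add_sum t f g, dsq_eq_sum_add_sum t f' g', hsupp]
  simp only [add_sub_cancel_left]
  exact Finset.sum_congr rfl fun u hu => by rw [h u (Finset.mem_sdiff.mp hu).2]

end Dist

section Psi

variable {V : Type*} [DecidableEq V] {v w : V}

lemma psi_apply_left (hvw : v ≠ w) (f : V →₀ ℝ) : psi v w f v = foldFst (f v) (f w) := by
  simp [psi, foldFst, hvw]

lemma psi_apply_right (f : V →₀ ℝ) : psi v w f w = foldSnd (f v) (f w) := by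
  simp [psi, foldSnd]

lemma psi_apply_of_ne {u : V} (huv : u ≠ v) (huw : u ≠ w) (f : V →₀ ℝ) :
    psi v w f u = f u := by
  simp [psi, Finsupp.update_apply, huv, huw]

lemma psi_mem_halfSpace (hvw : v ≠ w) (f : V →₀ ℝ) : psi v w f ∈ halfSpace v w := by
  show psi v w f w ≤ psi v w f v
  rw [psi_apply_left hvw, psi_apply_right]
  exact foldSnd_le_foldFst (f v) (f w)

lemma psi_eq_self (f : V →₀ ℝ) (hf : f ∈ halfSpace v w) : psi v w f = f := by
  have hwv : f w ≤ f v := hf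
  rw [psi, max_eq_left (by linarith), min_eq_left (by linarith),
    Finsupp.update_self, Finsupp.update_self]

lemma dsq_psi_add_dsq_psi_le (hvw : v ≠ w) (f : V →₀ ℝ) {g : V →₀ ℝ} (hg : g ∈ halfSpace v w) :
    dsq f (psi v w f) + dsq (psi v w f) g ≤ dsq f g := by
  have off : ∀ u ∉ ({v, w} : Finset V), psi v w f u = f u := fun u hu => by
    simp only [Finset.mem_insert, Finset.mem_singleton, not_or] at hu
    exact psi_apply_of_ne hu.1 hu.2 f
  have h₁ := dsq_sub_sum_eq_of_eqOn (f := f) (g := f) (f' := f) (g' := psi v w f)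
    fun u hu => by rw [off u hu]
  have h₂ := dsq_sub_sum_eq_of_eqOn (f := f) (g := g) (f' := psi v w f) (g' := g)
    fun u hu => by rw [off u hu]
  simp only [Finset.sum_pair hvw, dsq_self, psi_apply_left hvw, psi_apply_right] at h₁ h₂
  linarith [fold_pythagoras (a := f v) (b := f w) hg]

lemma dsq_psi_psi_le (hvw : v ≠ w) (f g : V →₀ ℝ) :
    dsq (psi v w f) (psi v w g) ≤ dsq f g := by
  have h := dsq_sub_sum_eq_of_eqOn (t := {v, w}) (f := f) (g := g)
    (f' := psi v w f) (g' := psi v w g) fun u hu => by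
      simp only [Finset.mem_insert, Finset.mem_singleton, not_or] at hu
      rw [psi_apply_of_ne hu.1 hu.2, psi_apply_of_ne hu.1 hu.2]
  simp only [Finset.sum_pair hvw, psi_apply_left hvw, psi_apply_right] at h
  linarith [fold_dist_le (f v) (f w) (g v) (g w)]

lemma eudist_psi_psi_le (hvw : v ≠ w) (f g : V →₀ ℝ) :
    eudist (psi v w f) (psi v w g) ≤ eudist f g :=
  Real.sqrt_le_sqrt (dsq_psi_psi_le hvw f g)

lemma psi_unit_bounds (hvw : v ≠ w) {f : V →₀ ℝ} (hf : ∀ u, 0 ≤ f u ∧ f u ≤ 1) (u : V) :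
    0 ≤ psi v w f u ∧ psi v w f u ≤ 1 := by
  obtain ⟨hv₀, hv₁⟩ := hf v
  obtain ⟨hw₀, hw₁⟩ := hf w
  by_cases huv : u = v
  · subst huv
    rw [psi_apply_left hvw]
    exact ⟨le_max_of_le_left hv₀, max_le hv₁ (by linarith)⟩
  by_cases huw : u = w
  · subst huw
    rw [psi_apply_right]
    exact ⟨le_min hw₀ (by linarith), min_le_of_left_le hw₁⟩
  rw [psi_apply_of_ne huv huw]
  exact hf u

/-- Mass only moves from `w` to `v`, so a support may grow only by `v`, and only if it
contains `w`. -/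
lemma psi_support_subset (hvw : v ≠ w) {f : V →₀ ℝ} (hf : ∀ u, 0 ≤ f u) {s : Finset V}
    (hfs : f.support ⊆ s) (hs : w ∈ s → v ∈ s) : (psi v w f).support ⊆ s := by
  intro u hu
  rw [Finsupp.mem_support_iff] at hu
  by_cases huv : u = v
  · subst huv
    by_cases hfu : f u = 0
    · refine hs (hfs (Finsupp.mem_support_iff.mpr fun hfw => hu ?_))
      rw [psi_apply_left hvw, hfu, hfw]
      simp [foldFst]
    · exact hfs (Finsupp.mem_support_iff.mpr hfu)
  by_cases huw : u = w
  · subst huw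
    refine hfs (Finsupp.mem_support_iff.mpr fun hfu => hu ?_)
    rw [psi_apply_right, hfu, foldSnd_of_le (hf v)]
  rw [psi_apply_of_ne huv huw] at hu
  exact hfs (Finsupp.mem_support_iff.mpr hu)

end Psi

section Intrinsic

variable {V : Type*} (K : ASC V)

def cubeAdj (f g : V →₀ ℝ) : Prop :=
  ∃ σ ∈ K.faces, f.support ⊆ σ ∧ g.support ⊆ σ ∧
    (∀ v : V, 0 ≤ f v ∧ f v ≤ 1) ∧ (∀ v : V, 0 ≤ g v ∧ g v ≤ 1)

noncomputable def stringLength (p : List (V →₀ ℝ)) : ℝ :=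
  ((p.zip p.tail).map fun q => eudist q.1 q.2).sum

def stringLengths (x y : V →₀ ℝ) : Set ℝ :=
  {L | ∃ p : List (V →₀ ℝ), p ≠ [] ∧ p.head? = some x ∧ p.getLast? = some y ∧
    (∀ f ∈ p, f ∈ CC K) ∧ p.IsChain (cubeAdj K) ∧ L = stringLength p}

lemma intrDist_eq_sInf (x y : V →₀ ℝ) : intrDist K x y = sInf (stringLengths K x y) := rfl

variable {K}

lemma cubeAdj_self {f : V →₀ ℝ} (hf : f ∈ CC K) : cubeAdj K f f :=
  let ⟨σ, hσ, hfσ, hf01⟩ := hf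
  ⟨σ, hσ, hfσ, hfσ, hf01, hf01⟩

lemma cubeAdj.symm {f g : V →₀ ℝ} (h : cubeAdj K f g) : cubeAdj K g f :=
  let ⟨σ, hσ, hfσ, hgσ, hf01, hg01⟩ := h
  ⟨σ, hσ, hgσ, hfσ, hg01, hf01⟩

lemma cubeAdj.mem_CC_left {f g : V →₀ ℝ} (h : cubeAdj K f g) : f ∈ CC K :=
  let ⟨σ, hσ, hfσ, _, hf01, _⟩ := h
  ⟨σ, hσ, hfσ, hf01⟩

lemma cubeAdj.mem_CC_right {f g : V →₀ ℝ} (h : cubeAdj K f g) : g ∈ CC K :=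
  let ⟨σ, hσ, _, hgσ, _, hg01⟩ := h
  ⟨σ, hσ, hgσ, hg01⟩

lemma stringLength_nonneg (p : List (V →₀ ℝ)) : 0 ≤ stringLength p :=
  List.sum_nonneg fun _ hq =>
    let ⟨_, _, hq⟩ := List.mem_map.mp hq
    hq ▸ Real.sqrt_nonneg _

lemma stringLength_map_le {φ : (V →₀ ℝ) → V →₀ ℝ} (hφ : ∀ f g, eudist (φ f) (φ g) ≤ eudist f g)
    (p : List (V →₀ ℝ)) : stringLength (p.map φ) ≤ stringLength p := by
  rw [stringLength, stringLength, ← List.map_tail, List.zip_map, List.map_map]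
  exact List.sum_le_sum fun q _ => hφ q.1 q.2

variable {φ : (V →₀ ℝ) → V →₀ ℝ} {x y : V →₀ ℝ}

lemma exists_mem_stringLengths_map_le (hadj : ∀ f g, cubeAdj K f g → cubeAdj K (φ f) (φ g))
    (hφ : ∀ f g, eudist (φ f) (φ g) ≤ eudist f g) {L : ℝ} (hL : L ∈ stringLengths K x y) :
    ∃ L' ∈ stringLengths K (φ x) (φ y), L' ≤ L := by
  obtain ⟨p, hp, hpx, hpy, hpCC, hpadj, rfl⟩ := hL
  refine ⟨_, ⟨p.map φ, by simpa using hp, ?_, ?_, ?_, ?_, rfl⟩, stringLength_map_le hφ p⟩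
  · rw [List.head?_map, hpx]; rfl
  · rw [List.getLast?_map, hpy]; rfl
  · simp only [List.mem_map, forall_exists_index, and_imp, forall_apply_eq_imp_iff₂]
    exact fun f hf => (hadj f f (cubeAdj_self (hpCC f hf))).mem_CC_left
  · exact (List.isChain_map φ).mpr (hpadj.imp fun f g => hadj f g)

lemma stringLengths_nonempty_of_cubeAdj {x' y' : V →₀ ℝ} (hx : cubeAdj K x x')
    (hy : cubeAdj K y' y) (h : (stringLengths K x' y').Nonempty) :
    (stringLengths K x y).Nonempty := by
  obtain ⟨_, p, hp, hpx, hpy, hpCC, hpadj, -⟩ := h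
  refine ⟨_, (x :: p) ++ [y], by simp, by simp, List.getLast?_concat .., ?_, ?_, rfl⟩
  · simp only [List.mem_append, List.mem_cons, List.not_mem_nil, or_false]
    rintro f ((rfl | hf) | rfl)
    exacts [hx.mem_CC_left, hpCC f hf, hy.mem_CC_right]
  · refine List.isChain_append.mpr ⟨List.isChain_cons.mpr ⟨?_, hpadj⟩, List.isChain_singleton y, ?_⟩
    · intro a ha
      rw [hpx, Option.mem_def, Option.some_inj] at ha
      exact ha ▸ hx
    · intro a ha b hb
      rw [List.getLast?_cons, hpy, Option.mem_def] at ha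
      cases ha
      cases hb
      exact hy

/-- The hypotheses `hx` and `hy` handle the case where no string joins `x` to `y`, so that
`intrDist K x y = sInf ∅ = 0`. -/
theorem intrDist_map_le (hadj : ∀ f g, cubeAdj K f g → cubeAdj K (φ f) (φ g))
    (hφ : ∀ f g, eudist (φ f) (φ g) ≤ eudist f g) (hx : cubeAdj K x (φ x))
    (hy : cubeAdj K (φ y) y) : intrDist K (φ x) (φ y) ≤ intrDist K x y := by
  rw [intrDist_eq_sInf, intrDist_eq_sInf]
  have hbdd : BddBelow (stringLengths K (φ x) (φ y)) :=
    ⟨0, by rintro _ ⟨p, -, -, -, -, -, rfl⟩; exact stringLength_nonneg p⟩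
  rcases (stringLengths K x y).eq_empty_or_nonempty with hempty | hne
  · have : stringLengths K (φ x) (φ y) = ∅ := Set.not_nonempty_iff_eq_empty.mp fun h =>
      (stringLengths_nonempty_of_cubeAdj hx hy h).ne_empty hempty
    rw [hempty, this]
  · refine le_csInf hne fun L hL => ?_
    obtain ⟨L', hL', hle⟩ := exists_mem_stringLengths_map_le hadj hφ hL
    exact (csInf_le hbdd hL').trans hle

end Intrinsic

section Compatible

variable {V : Type*} [PartialOrder V] {K : ASC V}
  (hcompat : ∀ σ ∈ K.faces, ∃ τ ∈ K.faces, ∀ x : V, x ∈ τ ↔ ∃ y ∈ σ, x ≤ y)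
include hcompat

lemma exists_face_superset_of_le {v w : V} (hvw : v ≤ w) {σ : Finset V} (hσ : σ ∈ K.faces) :
    ∃ τ ∈ K.faces, σ ⊆ τ ∧ (w ∈ τ → v ∈ τ) := by
  obtain ⟨τ, hτ, hτσ⟩ := hcompat σ hσ
  refine ⟨τ, hτ, fun u hu => (hτσ u).mpr ⟨u, hu, le_rfl⟩, fun hw => ?_⟩
  obtain ⟨y, hy, hwy⟩ := (hτσ w).mp hw
  exact (hτσ v).mpr ⟨y, hy, hvw.trans hwy⟩

variable [DecidableEq V] {v w : V}

lemma cubeAdj_psi_psi (hvw : v < w) {f g : V →₀ ℝ} (h : cubeAdj K f g) :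
    cubeAdj K (psi v w f) (psi v w g) := by
  obtain ⟨σ, hσ, hfσ, hgσ, hf01, hg01⟩ := h
  obtain ⟨τ, hτ, hστ, hwv⟩ := exists_face_superset_of_le hcompat hvw.le hσ
  exact ⟨τ, hτ, psi_support_subset hvw.ne (fun u => (hf01 u).1) (hfσ.trans hστ) hwv,
    psi_support_subset hvw.ne (fun u => (hg01 u).1) (hgσ.trans hστ) hwv,
    psi_unit_bounds hvw.ne hf01, psi_unit_bounds hvw.ne hg01⟩

lemma cubeAdj_self_psi (hvw : v < w) {f : V →₀ ℝ} (hf : f ∈ CC K) : cubeAdj K f (psi v w f) := by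
  obtain ⟨σ, hσ, hfσ, hf01⟩ := hf
  obtain ⟨τ, hτ, hστ, hwv⟩ := exists_face_superset_of_le hcompat hvw.le hσ
  exact ⟨τ, hτ, hfσ.trans hστ,
    psi_support_subset hvw.ne (fun u => (hf01 u).1) (hfσ.trans hστ) hwv,
    hf01, psi_unit_bounds hvw.ne hf01⟩

end Compatible

theorem stmt17_general {V : Type*} [DecidableEq V] [PartialOrder V] (K : ASC V)
    (hcompat : ∀ σ ∈ K.faces, ∃ τ ∈ K.faces, ∀ x : V, x ∈ τ ↔ ∃ y ∈ σ, x ≤ y)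
    (v w : V) (hvw : v < w) :
    -- ψ maps the cubical cone into itself
    Set.MapsTo (psi v w) (CC K) (CC K) ∧
    -- ψ is the nearest-point projection onto the half-space {t_v ≥ t_w}:
    (∀ f : V →₀ ℝ, psi v w f ∈ halfSpace v w) ∧
    (∀ f : V →₀ ℝ, ∀ g ∈ halfSpace v w, dsq f (psi v w f) ≤ dsq f g) ∧
    (∀ f : V →₀ ℝ, ∀ g ∈ halfSpace v w, dsq f g = dsq f (psi v w f) → g = psi v w f) ∧
    -- ψ is a retraction: it fixes CC(K) ∩ {t_v ≥ t_w} pointwise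
    (∀ f ∈ CC K ∩ halfSpace v w, psi v w f = f) ∧
    -- ψ is non-expanding for the intrinsic metric of CC(K)
    (∀ x ∈ CC K, ∀ y ∈ CC K, intrDist K (psi v w x) (psi v w y) ≤ intrDist K x y) := by
  have hadj : ∀ f g, cubeAdj K f g → cubeAdj K (psi v w f) (psi v w g) :=
    fun _ _ => cubeAdj_psi_psi hcompat hvw
  refine ⟨fun f hf => (hadj f f (cubeAdj_self hf)).mem_CC_left, psi_mem_halfSpace hvw.ne,
    fun f g hg => ?_, fun f g hg hdist => ?_, fun f hf => psi_eq_self f hf.2,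
    fun x hx y hy => ?_⟩
  · linarith [dsq_psi_add_dsq_psi_le hvw.ne f hg, dsq_nonneg (psi v w f) g]
  · have hzero : dsq (psi v w f) g = 0 := le_antisymm
      (by linarith [dsq_psi_add_dsq_psi_le hvw.ne f hg]) (dsq_nonneg _ _)
    exact (eq_of_dsq_eq_zero hzero).symm
  · exact intrDist_map_le hadj (eudist_psi_psi_le hvw.ne) (cubeAdj_self_psi hcompat hvw hx)
      (cubeAdj_self_psi hcompat hvw hy).symm

/-- Let `K` be a finite-dimensional abstract simplicial complex with a
compatible partial order on its vertices and let `v < w` be vertices.  Then `ψ_{vw}` maps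
`CC(K)` into `CC(K)`; it is the nearest-point projection of the ambient Euclidean space
onto the half-space `{t_v ≥ t_w}`; and it restricts to a non-expanding (for the intrinsic
metric) retraction of `CC(K)` onto `CC(K) ∩ {t_v ≥ t_w}`. -/
theorem stmt17 {V : Type*} [DecidableEq V] [PartialOrder V] (K : ASC V)
    (hfd : ∃ n : ℕ, ∀ σ ∈ K.faces, σ.card ≤ n)
    (hcompat : ∀ σ ∈ K.faces, ∃ τ ∈ K.faces, ∀ x : V, x ∈ τ ↔ ∃ y ∈ σ, x ≤ y)
    (v w : V) (hvw : v < w) :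
    -- ψ maps the cubical cone into itself
    Set.MapsTo (psi v w) (CC K) (CC K) ∧
    -- ψ is the nearest-point projection onto the half-space {t_v ≥ t_w}:
    (∀ f : V →₀ ℝ, psi v w f ∈ halfSpace v w) ∧
    (∀ f : V →₀ ℝ, ∀ g ∈ halfSpace v w, dsq f (psi v w f) ≤ dsq f g) ∧
    (∀ f : V →₀ ℝ, ∀ g ∈ halfSpace v w, dsq f g = dsq f (psi v w f) → g = psi v w f) ∧
    -- ψ is a retraction: it fixes CC(K) ∩ {t_v ≥ t_w} pointwise
    (∀ f ∈ CC K ∩ halfSpace v w, psi v w f = f) ∧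
    -- ψ is non-expanding for the intrinsic metric of CC(K)
    (∀ x ∈ CC K, ∀ y ∈ CC K, intrDist K (psi v w x) (psi v w y) ≤ intrDist K x y) :=
  stmt17_general K hcompat v w hvw
end
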